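/- arXiv:2106.04223 — 3 statements merged into one kernel-verified Lean document; each statement's English description precedes it below -/
import Mathlib

section
/- Let λ₁, λ₂, λ₃ > 0 and 0 < γ < 1/λ₁, and set γ' = γ/(1 − λ₁γ). Let X and Y be independent positive real random variables with cumulative distribution functions F_X and F_Y. Then P[ X·Y/(λ₁·X·Y + λ₂·X + λ₃·Y + 1) ≤ γ ] ≥ F_X(λ₃·γ') + F_Y(λ₂·γ') − F_X(λ₃·γ')·F_Y(λ₂·γ'). -/
open MeasureTheory ProbabilityTheory

/-- Lower bound on the outage probability of the impaired AF link in terms of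
the per-hop CDFs, for a threshold below the SNDR ceiling.
Here `l1, l2, l3` stand for λ₁, λ₂, λ₃ and `γ' = γ/(1 − λ₁γ)`. -/
theorem outage_prob_lower_bound
    {Ω : Type*} [MeasurableSpace Ω] (μ : Measure Ω) [IsProbabilityMeasure μ]
    (l1 l2 l3 γ γ' : ℝ) (hl1 : 0 < l1) (hl2 : 0 < l2) (hl3 : 0 < l3)
    (hγpos : 0 < γ) (hγlt : γ < 1 / l1) (hγ' : γ' = γ / (1 - l1 * γ))
    (X Y : Ω → ℝ) (hXm : Measurable X) (hYm : Measurable Y)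
    (hXpos : ∀ ω, 0 < X ω) (hYpos : ∀ ω, 0 < Y ω)
    (hindep : IndepFun X Y μ)
    (FX FY : ℝ → ℝ)
    (hFX : ∀ x, FX x = (μ {ω | X ω ≤ x}).toReal)
    (hFY : ∀ y, FY y = (μ {ω | Y ω ≤ y}).toReal) :
    FX (l3 * γ') + FY (l2 * γ') - FX (l3 * γ') * FY (l2 * γ')
      ≤ (μ {ω | X ω * Y ω /
          (l1 * X ω * Y ω + l2 * X ω + l3 * Y ω + 1) ≤ γ}).toReal := by
  have h1 : 0 < 1 - l1 * γ := by
    have := (lt_div_iff₀ hl1).mp hγlt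
    nlinarith
  have hγ'pos : 0 < γ' := by rw [hγ']; exact div_pos hγpos h1
  set a := l3 * γ' with ha
  set b := l2 * γ' with hb
  set S := {ω | X ω * Y ω / (l1 * X ω * Y ω + l2 * X ω + l3 * Y ω + 1) ≤ γ} with hS
  -- inclusion
  have hsub : {ω | X ω ≤ a} ∪ {ω | Y ω ≤ b} ⊆ S := by
    intro ω hω
    have hx := hXpos ω
    have hy := hYpos ω
    have hD : 0 < l1 * X ω * Y ω + l2 * X ω + l3 * Y ω + 1 := by positivity
    simp only [hS, Set.mem_setOf_eq]
    rw [div_le_iff₀ hD]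
    have hXY : X ω * Y ω ≤ γ' * (l2 * X ω + l3 * Y ω + 1) := by
      rcases hω with h | h
      · simp only [Set.mem_setOf_eq, ha] at h
        nlinarith [mul_le_mul_of_nonneg_right h hy.le, mul_pos hl2 hx, hγ'pos,
          mul_pos hγ'pos (mul_pos hl2 hx)]
      · simp only [Set.mem_setOf_eq, hb] at h
        nlinarith [mul_le_mul_of_nonneg_left h hx.le, mul_pos hl3 hy, hγ'pos,
          mul_pos hγ'pos (mul_pos hl3 hy)]
    have h2 : (1 - l1 * γ) * (X ω * Y ω) ≤ (1 - l1 * γ) * (γ' * (l2 * X ω + l3 * Y ω + 1)) :=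
      mul_le_mul_of_nonneg_left hXY h1.le
    have h3 : (1 - l1 * γ) * (γ' * (l2 * X ω + l3 * Y ω + 1))
        = γ * (l2 * X ω + l3 * Y ω + 1) := by
      rw [hγ']; field_simp
    nlinarith [h2, h3, mul_pos hx hy]
  -- measurability
  have hA : MeasurableSet {ω | X ω ≤ a} := hXm measurableSet_Iic
  have hB : MeasurableSet {ω | Y ω ≤ b} := hYm measurableSet_Iic
  -- independence
  have hind : μ ({ω | X ω ≤ a} ∩ {ω | Y ω ≤ b})
      = μ {ω | X ω ≤ a} * μ {ω | Y ω ≤ b} := by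
    have := hindep.measure_inter_preimage_eq_mul (Set.Iic a) (Set.Iic b)
      measurableSet_Iic measurableSet_Iic
    simpa [Set.preimage, Set.mem_Iic] using this
  -- inclusion-exclusion
  have hie : μ ({ω | X ω ≤ a} ∪ {ω | Y ω ≤ b}) + μ ({ω | X ω ≤ a} ∩ {ω | Y ω ≤ b})
      = μ {ω | X ω ≤ a} + μ {ω | Y ω ≤ b} := measure_union_add_inter _ hB
  have hAne := measure_ne_top μ {ω | X ω ≤ a}
  have hBne := measure_ne_top μ {ω | Y ω ≤ b}
  have hUne := measure_ne_top μ ({ω | X ω ≤ a} ∪ {ω | Y ω ≤ b})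
  have hIne := measure_ne_top μ ({ω | X ω ≤ a} ∩ {ω | Y ω ≤ b})
  have hieR : (μ ({ω | X ω ≤ a} ∪ {ω | Y ω ≤ b})).toReal
      = FX a + FY b - FX a * FY b := by
    rw [hFX, hFY, ← ENNReal.toReal_mul, ← hind]
    have := congrArg ENNReal.toReal hie
    rw [ENNReal.toReal_add hUne hIne, ENNReal.toReal_add hAne hBne] at this
    linarith
  rw [← hieR]
  exact ENNReal.toReal_mono (measure_ne_top μ S) (measure_mono hsub)
end

section
/- Let m > 0, Ω > 0, η > 0, α > 0 and L > 0 be reals, c = m/(Ω·η), and let f_W be a nonnegative integrable probability density supported on (0, L]. Define F(x) = ∫₀^L ( ∫₀^{c·x·r^α} t^{m−1}·e^{−t} dt / Γ(m) )·f_W(r) dr. Then lim_{x→0⁺} x^{−m}·F(x) = (c^m/(m·Γ(m)))·∫₀^L r^{m·α}·f_W(r) dr; that is, F(x) behaves as (c^m/(m·Γ(m)))·(∫₀^L r^{m·α} f_W(r) dr)·x^m as x → 0⁺. -/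
open MeasureTheory Real Filter

lemma aux_int (m : ℝ) (hm : 0 < m) (a b : ℝ) :
    IntervalIntegrable (fun t => t ^ (m - 1) * Real.exp (-t)) volume a b :=
  (intervalIntegral.intervalIntegrable_rpow' (by linarith)).mul_continuousOn
    ((Real.continuous_exp.comp continuous_neg).continuousOn)

lemma aux_rpow_int (m : ℝ) (hm : 0 < m) (u : ℝ) :
    (∫ t in (0:ℝ)..u, t ^ (m - 1)) = u ^ m / m := by
  rw [integral_rpow (Or.inl (by linarith))]
  rw [Real.zero_rpow (by linarith : m - 1 + 1 ≠ 0)]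
  have h : m - 1 + 1 = m := by ring
  rw [h]; ring

lemma aux_upper (m : ℝ) (hm : 0 < m) (u : ℝ) (hu : 0 ≤ u) :
    (∫ t in (0:ℝ)..u, t ^ (m - 1) * Real.exp (-t)) ≤ u ^ m / m := by
  rw [← aux_rpow_int m hm u]
  apply intervalIntegral.integral_mono_on hu (aux_int m hm 0 u)
    (intervalIntegral.intervalIntegrable_rpow' (by linarith))
  intro t ht
  have h1 : (0:ℝ) ≤ t ^ (m - 1) := Real.rpow_nonneg ht.1 _
  have h2 : Real.exp (-t) ≤ 1 := Real.exp_le_one_iff.mpr (by linarith [ht.1])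
  calc t ^ (m - 1) * Real.exp (-t) ≤ t ^ (m - 1) * 1 :=
        mul_le_mul_of_nonneg_left h2 h1
    _ = t ^ (m - 1) := mul_one _

lemma aux_lower (m : ℝ) (hm : 0 < m) (u : ℝ) (hu : 0 ≤ u) :
    Real.exp (-u) * (u ^ m / m) ≤ ∫ t in (0:ℝ)..u, t ^ (m - 1) * Real.exp (-t) := by
  have h : Real.exp (-u) * (u ^ m / m) = ∫ t in (0:ℝ)..u, Real.exp (-u) * t ^ (m - 1) := by
    rw [intervalIntegral.integral_const_mul, aux_rpow_int m hm u]
  rw [h]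
  apply intervalIntegral.integral_mono_on hu
    ((intervalIntegral.intervalIntegrable_rpow' (by linarith)).const_mul _) (aux_int m hm 0 u)
  intro t ht
  have h1 : (0:ℝ) ≤ t ^ (m - 1) := Real.rpow_nonneg ht.1 _
  have h2 : Real.exp (-u) ≤ Real.exp (-t) := Real.exp_le_exp.mpr (by linarith [ht.2])
  calc Real.exp (-u) * t ^ (m - 1) ≤ Real.exp (-t) * t ^ (m - 1) :=
        mul_le_mul_of_nonneg_right h2 h1
    _ = t ^ (m - 1) * Real.exp (-t) := mul_comm _ _

lemma aux_nonneg (m : ℝ) (hm : 0 < m) (u : ℝ) (hu : 0 ≤ u) :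
    0 ≤ ∫ t in (0:ℝ)..u, t ^ (m - 1) * Real.exp (-t) :=
  le_trans (by positivity) (aux_lower m hm u hu)

lemma aux_cont (m : ℝ) (hm : 0 < m) :
    Continuous fun u : ℝ => ∫ t in (0:ℝ)..u, t ^ (m - 1) * Real.exp (-t) :=
  intervalIntegral.continuous_primitive (fun a b => aux_int m hm a b) 0

/-- Small-argument power-law behaviour of the second-hop SNR CDF:
`x^{−m}·F(x) → (c^m/(m·Γ(m)))·∫₀^L r^{m·α}·f_W(r) dr` as `x → 0⁺`. -/
theorem nakagami_second_hop_snr_cdf_asymptotic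
    (m Om η α L c : ℝ) (hm : 0 < m) (hOm : 0 < Om) (hη : 0 < η)
    (hα : 0 < α) (hL : 0 < L) (hc : c = m / (Om * η))
    (fW : ℝ → ℝ) (hfW_nonneg : ∀ r, 0 ≤ fW r)
    (hfW_int : Integrable fW)
    (hfW_one : ∫ r, fW r = 1)
    (hfW_supp : ∀ r, r ∉ Set.Ioc (0 : ℝ) L → fW r = 0)
    (F : ℝ → ℝ)
    (hF : ∀ x, F x = ∫ r in (0 : ℝ)..L,
        ((∫ t in (0 : ℝ)..(c * x * r ^ α),
            t ^ (m - 1) * Real.exp (-t)) / Real.Gamma m) * fW r) :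
    Tendsto (fun x : ℝ => x ^ (-m) * F x) (nhdsWithin 0 (Set.Ioi 0))
      (nhds ((c ^ m / (m * Real.Gamma m)) *
        ∫ r in (0 : ℝ)..L, r ^ (m * α) * fW r)) := by
  have hΓ : 0 < Real.Gamma m := Real.Gamma_pos_of_pos hm
  have hc0 : 0 < c := by rw [hc]; positivity
  set J : ℝ := ∫ r in (0 : ℝ)..L, r ^ (m * α) * fW r with hJdef
  set C : ℝ := c ^ m / (m * Real.Gamma m) * J with hCdef
  -- integrability of r^{mα} fW on [0,L]
  have hIJ : IntervalIntegrable (fun r => r ^ (m * α) * fW r) volume 0 L := by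
    rw [intervalIntegrable_iff_integrableOn_Ioc_of_le hL.le]
    apply Integrable.bdd_mul (c := L ^ (m * α)) hfW_int.integrableOn
      ((Real.continuous_rpow_const (by positivity : (0:ℝ) ≤ m * α)).measurable.aestronglyMeasurable)
    filter_upwards [ae_restrict_mem measurableSet_Ioc] with r hr
    rw [Real.norm_eq_abs, abs_of_nonneg (Real.rpow_nonneg hr.1.le _)]
    exact Real.rpow_le_rpow hr.1.le hr.2 (by positivity)
  -- key two-sided bound for x > 0
  have key : ∀ x ∈ Set.Ioi (0:ℝ),
      Real.exp (-(c * x * L ^ α)) * C ≤ x ^ (-m) * F x ∧ x ^ (-m) * F x ≤ C := by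
    intro x hx
    have hx0 : (0:ℝ) < x := hx
    have hxm : (0:ℝ) < x ^ (-m) := Real.rpow_pos_of_pos hx0 _
    have hxmm : x ^ (-m) * x ^ m = 1 := by
      rw [← Real.rpow_add hx0]; simp
    set e : ℝ := Real.exp (-(c * x * L ^ α)) with hedef
    have he1 : e ≤ 1 := Real.exp_le_one_iff.mpr (neg_nonpos.mpr (by positivity))
    have he0 : 0 < e := Real.exp_pos _
    -- facts about u r = c*x*r^α for r ∈ Icc 0 L
    have hu_nonneg : ∀ r ∈ Set.Icc (0:ℝ) L, 0 ≤ c * x * r ^ α := by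
      intro r hr
      have := Real.rpow_nonneg hr.1 α
      positivity
    have hu_le : ∀ r ∈ Set.Icc (0:ℝ) L, c * x * r ^ α ≤ c * x * L ^ α := by
      intro r hr
      have h : r ^ α ≤ L ^ α := Real.rpow_le_rpow hr.1 hr.2 hα.le
      exact mul_le_mul_of_nonneg_left h (by positivity)
    have hum : ∀ r ∈ Set.Icc (0:ℝ) L,
        (c * x * r ^ α) ^ m = c ^ m * x ^ m * r ^ (m * α) := by
      intro r hr
      rw [Real.mul_rpow (by positivity) (Real.rpow_nonneg hr.1 α),
        Real.mul_rpow hc0.le hx0.le, mul_comm m α, Real.rpow_mul hr.1]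
    -- integrability of the middle integrand
    have hmidInt : IntervalIntegrable (fun r =>
        (∫ t in (0:ℝ)..(c * x * r ^ α), t ^ (m - 1) * Real.exp (-t)) / Real.Gamma m * fW r)
        volume 0 L := by
      rw [intervalIntegrable_iff_integrableOn_Ioc_of_le hL.le]
      apply Integrable.bdd_mul (c := (c * x * L ^ α) ^ m / m / Real.Gamma m)
        hfW_int.integrableOn
      · exact (((aux_cont m hm).measurable.comp
          (((Real.continuous_rpow_const hα.le).measurable).const_mul (c * x))).div_const _).aestronglyMeasurable
      · filter_upwards [ae_restrict_mem measurableSet_Ioc] with r hr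
        have hr' : r ∈ Set.Icc (0:ℝ) L := ⟨hr.1.le, hr.2⟩
        have h0 := aux_nonneg m hm _ (hu_nonneg r hr')
        rw [Real.norm_eq_abs, abs_of_nonneg (by positivity)]
        gcongr
        calc (∫ t in (0:ℝ)..(c * x * r ^ α), t ^ (m - 1) * Real.exp (-t))
            ≤ (c * x * r ^ α) ^ m / m := aux_upper m hm _ (hu_nonneg r hr')
          _ ≤ (c * x * L ^ α) ^ m / m :=
              div_le_div_of_nonneg_right
                (Real.rpow_le_rpow (hu_nonneg r hr') (hu_le r hr') hm.le) hm.le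
    -- upper bound on F x
    have hFub : F x ≤ c ^ m * x ^ m / (m * Real.Gamma m) * J := by
      rw [hF x]
      have := intervalIntegral.integral_mono_on hL.le hmidInt
        (hIJ.const_mul (c ^ m * x ^ m / (m * Real.Gamma m))) (fun r hr => by
          have hu0 := hu_nonneg r hr
          have h1 : (∫ t in (0:ℝ)..(c * x * r ^ α), t ^ (m - 1) * Real.exp (-t))
              ≤ (c * x * r ^ α) ^ m / m := aux_upper m hm _ hu0
          have h2 : (∫ t in (0:ℝ)..(c * x * r ^ α), t ^ (m - 1) * Real.exp (-t)) / Real.Gamma m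
              ≤ c ^ m * x ^ m / (m * Real.Gamma m) * r ^ (m * α) := by
            rw [div_le_iff₀ hΓ]
            calc (∫ t in (0:ℝ)..(c * x * r ^ α), t ^ (m - 1) * Real.exp (-t))
                ≤ (c * x * r ^ α) ^ m / m := h1
              _ = c ^ m * x ^ m / (m * Real.Gamma m) * r ^ (m * α) * Real.Gamma m := by
                  rw [hum r hr]; field_simp
          calc (∫ t in (0:ℝ)..(c * x * r ^ α), t ^ (m - 1) * Real.exp (-t)) / Real.Gamma m * fW r
              ≤ c ^ m * x ^ m / (m * Real.Gamma m) * r ^ (m * α) * fW r :=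
                mul_le_mul_of_nonneg_right h2 (hfW_nonneg r)
            _ = c ^ m * x ^ m / (m * Real.Gamma m) * (r ^ (m * α) * fW r) := by ring)
      calc (∫ r in (0:ℝ)..L,
            (∫ t in (0:ℝ)..(c * x * r ^ α), t ^ (m - 1) * Real.exp (-t)) / Real.Gamma m * fW r)
          ≤ ∫ r in (0:ℝ)..L, c ^ m * x ^ m / (m * Real.Gamma m) * (r ^ (m * α) * fW r) := this
        _ = c ^ m * x ^ m / (m * Real.Gamma m) * J := by
            rw [intervalIntegral.integral_const_mul]
    -- lower bound on F x
    have hFlb : e * (c ^ m * x ^ m / (m * Real.Gamma m)) * J ≤ F x := by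
      rw [hF x]
      have := intervalIntegral.integral_mono_on hL.le
        (hIJ.const_mul (e * (c ^ m * x ^ m / (m * Real.Gamma m)))) hmidInt (fun r hr => by
          have hu0 := hu_nonneg r hr
          have h1 : Real.exp (-(c * x * r ^ α)) * ((c * x * r ^ α) ^ m / m)
              ≤ ∫ t in (0:ℝ)..(c * x * r ^ α), t ^ (m - 1) * Real.exp (-t) :=
            aux_lower m hm _ hu0
          have he2 : e ≤ Real.exp (-(c * x * r ^ α)) :=
            Real.exp_le_exp.mpr (by linarith [hu_le r hr])
          have h2 : e * (c ^ m * x ^ m / (m * Real.Gamma m)) * r ^ (m * α)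
              ≤ (∫ t in (0:ℝ)..(c * x * r ^ α), t ^ (m - 1) * Real.exp (-t)) / Real.Gamma m := by
            rw [le_div_iff₀ hΓ]
            have h3 : e * (c ^ m * x ^ m / (m * Real.Gamma m)) * r ^ (m * α) * Real.Gamma m
                = e * ((c * x * r ^ α) ^ m / m) := by
              rw [hum r hr]; field_simp
            rw [h3]
            calc e * ((c * x * r ^ α) ^ m / m)
                ≤ Real.exp (-(c * x * r ^ α)) * ((c * x * r ^ α) ^ m / m) := by
                  apply mul_le_mul_of_nonneg_right he2 (by positivity)
              _ ≤ _ := h1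
          calc e * (c ^ m * x ^ m / (m * Real.Gamma m)) * (r ^ (m * α) * fW r)
              = e * (c ^ m * x ^ m / (m * Real.Gamma m)) * r ^ (m * α) * fW r := by ring
            _ ≤ (∫ t in (0:ℝ)..(c * x * r ^ α), t ^ (m - 1) * Real.exp (-t)) / Real.Gamma m * fW r :=
                mul_le_mul_of_nonneg_right h2 (hfW_nonneg r))
      calc e * (c ^ m * x ^ m / (m * Real.Gamma m)) * J
          = ∫ r in (0:ℝ)..L, e * (c ^ m * x ^ m / (m * Real.Gamma m)) * (r ^ (m * α) * fW r) := by
            rw [intervalIntegral.integral_const_mul]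
        _ ≤ _ := this
    constructor
    · have := mul_le_mul_of_nonneg_left hFlb hxm.le
      calc e * C = x ^ (-m) * (e * (c ^ m * x ^ m / (m * Real.Gamma m)) * J) := by
            rw [hCdef]
            have : x ^ (-m) * (e * (c ^ m * x ^ m / (m * Real.Gamma m)) * J)
                = e * ((x ^ (-m) * x ^ m) * (c ^ m / (m * Real.Gamma m)) * J) := by ring
            rw [this, hxmm]; ring
        _ ≤ x ^ (-m) * F x := this
    · have := mul_le_mul_of_nonneg_left hFub hxm.le
      calc x ^ (-m) * F x ≤ x ^ (-m) * (c ^ m * x ^ m / (m * Real.Gamma m) * J) := this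
        _ = C := by
            rw [hCdef]
            have : x ^ (-m) * (c ^ m * x ^ m / (m * Real.Gamma m) * J)
                = (x ^ (-m) * x ^ m) * (c ^ m / (m * Real.Gamma m)) * J := by ring
            rw [this, hxmm]; ring
  -- squeeze
  have hlow : Tendsto (fun x : ℝ => Real.exp (-(c * x * L ^ α)) * C)
      (nhdsWithin 0 (Set.Ioi 0)) (nhds C) := by
    have hcont : Continuous fun x : ℝ => Real.exp (-(c * x * L ^ α)) * C := by
      fun_prop
    have := (hcont.tendsto 0).mono_left (nhdsWithin_le_nhds (s := Set.Ioi (0:ℝ)))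
    simpa using this
  refine tendsto_of_tendsto_of_tendsto_of_le_of_le' hlow tendsto_const_nhds ?_ ?_
  · filter_upwards [self_mem_nhdsWithin] with x hx using (key x hx).1
  · filter_upwards [self_mem_nhdsWithin] with x hx using (key x hx).2
end

section
/- Let 0 < H ≤ R be reals. Let h and Z be independent real random variables where h has density f_h(x) = 6x/H² − 6x²/H³ on [0, H] and Z has density f_Z(z) = 2z/R² on [0, R]. Then the random variable W = √(h² + Z²) has probability density f(w) given piecewise by: f(w) = 6w³/(R²H²) − 4w⁴/(R²H³) for 0 ≤ w < H; f(w) = 2w/R² for H ≤ w < R; and f(w) = 2w/R² − 6w·(w²−R²)/(R²H²) + 4w·(w²−R²)^{3/2}/(R²H³) for R ≤ w ≤ √(R²+H²); and f(w) = 0 otherwise. -/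
/-!
Since `Z` has density `2z/R²` on `[0, R]`, `Z²` is uniform on `[0, R²]`, so
`P(W ≤ t) = P(h² + Z² ≤ t²) = R⁻² ∫_{t²-R²}^{t²} G`, where `G = altitudeSqCDF H` is the
distribution function of `h²`. The substitution `v = w²` writes the same integral as
`∫₀ᵗ 2w (G(w²) - G(w² - R²)) / R² dw`, and this integrand (`distanceDensity`) is the stated
piecewise density: below `R` the term `G(w² - R²)` vanishes and `G(w²)` is the cubic
`3w²/H² - 2w³/H³` or `1`; on `[R, √(R² + H²)]`, `G(w²) = 1` and `G(w² - R²)` is the cubic at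
`√(w² - R²)`; beyond, both terms are `1`.
-/

open MeasureTheory ProbabilityTheory Set

noncomputable section

def altitudeSqCDF (H c : ℝ) : ℝ :=
  3 * min (√c) H ^ 2 / H ^ 2 - 2 * min (√c) H ^ 3 / H ^ 3

def distanceDensity (H R w : ℝ) : ℝ :=
  2 * w * (altitudeSqCDF H (w ^ 2) - altitudeSqCDF H (w ^ 2 - R ^ 2)) / R ^ 2

end

section altitudeSqCDF

variable {H : ℝ}

@[fun_prop]
lemma continuous_altitudeSqCDF : Continuous (altitudeSqCDF H) := by
  unfold altitudeSqCDF
  fun_prop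

lemma altitudeSqCDF_of_nonpos (hH : 0 ≤ H) {c : ℝ} (hc : c ≤ 0) : altitudeSqCDF H c = 0 := by
  simp [altitudeSqCDF, Real.sqrt_eq_zero'.2 hc, hH]

lemma altitudeSqCDF_of_sq_le (hH : 0 < H) {c : ℝ} (hc : H ^ 2 ≤ c) : altitudeSqCDF H c = 1 := by
  rw [altitudeSqCDF, min_eq_right (Real.le_sqrt_of_sq_le hc)]
  field_simp
  ring

lemma altitudeSqCDF_sq {w : ℝ} (hw : 0 ≤ w) (hwH : w ≤ H) :
    altitudeSqCDF H (w ^ 2) = 3 * w ^ 2 / H ^ 2 - 2 * w ^ 3 / H ^ 3 := by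
  rw [altitudeSqCDF, Real.sqrt_sq hw, min_eq_left hwH]

lemma monotone_altitudeSqCDF (hH : 0 < H) : Monotone (altitudeSqCDF H) := by
  intro a b hab
  have hm : min (√a) H ≤ min (√b) H := min_le_min_right H (Real.sqrt_le_sqrt hab)
  have hm₀ : 0 ≤ min (√a) H := le_min (Real.sqrt_nonneg a) hH.le
  have hmH : min (√b) H ≤ H := min_le_right _ _
  set m₁ := min (√a) H
  set m₂ := min (√b) H
  have hdiff : altitudeSqCDF H b - altitudeSqCDF H a
      = (m₂ - m₁) * (3 * H * (m₁ + m₂) - 2 * (m₁ ^ 2 + m₁ * m₂ + m₂ ^ 2)) / H ^ 3 := by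
    simp only [altitudeSqCDF, m₁, m₂]
    field_simp
    ring
  have : 0 ≤ (m₂ - m₁) * (3 * H * (m₁ + m₂) - 2 * (m₁ ^ 2 + m₁ * m₂ + m₂ ^ 2)) / H ^ 3 := by
    apply div_nonneg _ (by positivity)
    apply mul_nonneg (by linarith)
    nlinarith [mul_le_mul_of_nonneg_left hmH (hm₀.trans hm), mul_le_mul_of_nonneg_left hm hm₀,
      mul_le_mul_of_nonneg_left (hm.trans hmH) hm₀]
  linarith

lemma altitudeSqCDF_nonneg (hH : 0 < H) (c : ℝ) : 0 ≤ altitudeSqCDF H c := by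
  have := monotone_altitudeSqCDF hH (min_le_left c 0)
  rwa [altitudeSqCDF_of_nonpos hH.le (min_le_right c 0)] at this

end altitudeSqCDF

section distanceDensity

variable {H R w : ℝ}

@[fun_prop]
lemma continuous_distanceDensity : Continuous (distanceDensity H R) := by
  unfold distanceDensity
  fun_prop

lemma distanceDensity_nonneg (hH : 0 < H) (hw : 0 ≤ w) : 0 ≤ distanceDensity H R w := by
  have hmono := monotone_altitudeSqCDF hH (by linarith [sq_nonneg R] : w ^ 2 - R ^ 2 ≤ w ^ 2)
  exact div_nonneg (mul_nonneg (by linarith) (sub_nonneg.2 hmono)) (sq_nonneg R)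

lemma distanceDensity_of_lt (hH : 0 < H) (hHR : H ≤ R) (hw : 0 ≤ w) (hwH : w < H) :
    distanceDensity H R w = 6 * w ^ 3 / (R ^ 2 * H ^ 2) - 4 * w ^ 4 / (R ^ 2 * H ^ 3) := by
  rw [distanceDensity, altitudeSqCDF_sq hw hwH.le, altitudeSqCDF_of_nonpos hH.le (by nlinarith)]
  field_simp
  ring

lemma distanceDensity_of_le_of_lt (hH : 0 < H) (hHw : H ≤ w) (hwR : w < R) :
    distanceDensity H R w = 2 * w / R ^ 2 := by
  rw [distanceDensity, altitudeSqCDF_of_sq_le hH (by nlinarith),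
    altitudeSqCDF_of_nonpos hH.le (by nlinarith)]
  ring

lemma distanceDensity_of_le_of_le (hH : 0 < H) (hHR : H ≤ R) (hRw : R ≤ w)
    (hwB : w ≤ √(R ^ 2 + H ^ 2)) :
    distanceDensity H R w = 2 * w / R ^ 2 - 6 * w * (w ^ 2 - R ^ 2) / (R ^ 2 * H ^ 2)
      + 4 * w * (w ^ 2 - R ^ 2) ^ ((3 : ℝ) / 2) / (R ^ 2 * H ^ 3) := by
  have hu : 0 ≤ w ^ 2 - R ^ 2 := by nlinarith
  have huH : √(w ^ 2 - R ^ 2) ≤ H := by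
    rw [Real.sqrt_le_left hH.le]
    have := (Real.le_sqrt (by linarith) (by positivity)).1 hwB
    linarith
  have hR : 0 < R := hH.trans_le hHR
  rw [distanceDensity, altitudeSqCDF_of_sq_le hH (by nlinarith), ← Real.sq_sqrt hu,
    altitudeSqCDF_sq (Real.sqrt_nonneg _) huH, Real.rpow_div_two_eq_sqrt _ (sq_nonneg _),
    Real.sqrt_sq (Real.sqrt_nonneg _)]
  norm_cast
  field_simp
  ring

lemma distanceDensity_of_lt_sqrt (hH : 0 < H) (hwB : √(R ^ 2 + H ^ 2) < w) :
    distanceDensity H R w = 0 := by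
  have hw2 := (Real.sqrt_lt' ((Real.sqrt_nonneg _).trans_lt hwB)).1 hwB
  rw [distanceDensity, altitudeSqCDF_of_sq_le hH (by nlinarith [sq_nonneg R]),
    altitudeSqCDF_of_sq_le hH (by linarith)]
  ring

end distanceDensity

lemma piecewise_eq_ite_distanceDensity {H R : ℝ} (hH : 0 < H) (hHR : H ≤ R) (w : ℝ) :
    (if 0 ≤ w ∧ w < H then 6 * w ^ 3 / (R ^ 2 * H ^ 2) - 4 * w ^ 4 / (R ^ 2 * H ^ 3)
      else if H ≤ w ∧ w < R then 2 * w / R ^ 2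
      else if R ≤ w ∧ w ≤ √(R ^ 2 + H ^ 2) then
        2 * w / R ^ 2 - 6 * w * (w ^ 2 - R ^ 2) / (R ^ 2 * H ^ 2)
          + 4 * w * (w ^ 2 - R ^ 2) ^ ((3 : ℝ) / 2) / (R ^ 2 * H ^ 3)
      else 0) = if w ∈ Ici 0 then distanceDensity H R w else 0 := by
  by_cases hw : 0 ≤ w
  · rw [if_pos (mem_Ici.2 hw)]
    split_ifs with h₁ h₂ h₃
    · exact (distanceDensity_of_lt hH hHR h₁.1 h₁.2).symm
    · exact (distanceDensity_of_le_of_lt hH h₂.1 h₂.2).symm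
    · exact (distanceDensity_of_le_of_le hH hHR h₃.1 h₃.2).symm
    · push Not at h₁ h₂ h₃
      exact (distanceDensity_of_lt_sqrt hH (h₃ (h₂ (h₁ hw)))).symm
  · have hR : 0 < R := hH.trans_le hHR
    rw [if_neg (mt mem_Ici.1 hw), if_neg fun h => hw h.1, if_neg fun h => hw (hH.le.trans h.1),
      if_neg fun h => hw (hR.le.trans h.1)]

section ChangeOfVariables

variable {G : ℝ → ℝ}

lemma integral_two_mul_comp_const_sub_sq (hG : Continuous G) (s R : ℝ) :
    ∫ z in (0 : ℝ)..R, 2 * z * G (s - z ^ 2) = ∫ v in (s - R ^ 2)..s, G v := by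
  have := intervalIntegral.integral_comp_mul_deriv (a := 0) (b := R) (f := fun z => s - z ^ 2)
    (f' := fun z => -(2 * z)) (g := G)
    (fun z _ => by simpa using (hasDerivAt_pow 2 z).const_sub s) (by fun_prop) hG
  simp only [Function.comp_apply, ne_eq, OfNat.ofNat_ne_zero, not_false_eq_true, zero_pow,
    sub_zero, mul_neg, intervalIntegral.integral_neg] at this
  rw [intervalIntegral.integral_symm s, ← this, neg_neg]
  simp only [mul_comm]

lemma integral_two_mul_comp_sq_sub_comp_sq_sub_const (hG : Continuous G)
    (hG₀ : ∀ v ≤ 0, G v = 0) (t R : ℝ) :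
    ∫ w in (0 : ℝ)..t, 2 * w * (G (w ^ 2) - G (w ^ 2 - R ^ 2))
      = ∫ v in (t ^ 2 - R ^ 2)..t ^ 2, G v := by
  have h₁ := intervalIntegral.integral_comp_mul_deriv (a := 0) (b := t) (f := fun w => w ^ 2)
    (f' := fun w => 2 * w) (g := G) (fun w _ => by simpa using hasDerivAt_pow 2 w)
    (by fun_prop) hG
  have h₂ := intervalIntegral.integral_comp_mul_deriv (a := 0) (b := t)
    (f := fun w => w ^ 2 - R ^ 2) (f' := fun w => 2 * w) (g := G)
    (fun w _ => by simpa using (hasDerivAt_pow 2 w).sub_const (R ^ 2)) (by fun_prop) hG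
  have h₀ : ∫ v in (-R ^ 2)..0, G v = 0 := by
    rw [intervalIntegral.integral_congr (g := fun _ => 0) fun v hv => hG₀ v ?_]
    · simp
    · rw [uIcc_of_le (by nlinarith [sq_nonneg R])] at hv
      exact hv.2
  have hI := fun a b => hG.intervalIntegrable (μ := volume) a b
  have h₃ := intervalIntegral.integral_add_adjacent_intervals (hI (-R ^ 2) 0) (hI 0 (t ^ 2))
  have h₄ := intervalIntegral.integral_add_adjacent_intervals (hI (-R ^ 2) (t ^ 2 - R ^ 2))
    (hI _ (t ^ 2))
  simp only [Function.comp_apply, ne_eq, OfNat.ofNat_ne_zero, not_false_eq_true, zero_pow,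
    zero_sub] at h₁ h₂
  have e : ∀ w, 2 * w * (G (w ^ 2) - G (w ^ 2 - R ^ 2))
      = G (w ^ 2) * (2 * w) - G (w ^ 2 - R ^ 2) * (2 * w) := fun w => by ring
  simp only [e]
  rw [intervalIntegral.integral_sub ((by fun_prop : Continuous _).intervalIntegrable _ _)
    ((by fun_prop : Continuous _).intervalIntegrable _ _)]
  linarith

end ChangeOfVariables

lemma integral_distanceDensity {H R : ℝ} (hH : 0 < H) (t : ℝ) :
    ∫ w in (0 : ℝ)..t, distanceDensity H R w
      = (∫ v in (t ^ 2 - R ^ 2)..t ^ 2, altitudeSqCDF H v) / R ^ 2 := by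
  rw [← integral_two_mul_comp_sq_sub_comp_sq_sub_const continuous_altitudeSqCDF
    (fun _ => altitudeSqCDF_of_nonpos hH.le), ← intervalIntegral.integral_div]
  rfl

section Measure

lemma ProbabilityTheory.IndepFun.map_eq_map_prod {Ω α β γ : Type*} [MeasurableSpace Ω]
    [MeasurableSpace α] [MeasurableSpace β] [MeasurableSpace γ] {μ : Measure Ω}
    [IsFiniteMeasure μ] {X : Ω → α} {Y : Ω → β} (hXY : IndepFun X Y μ) (hX : Measurable X)
    (hY : Measurable Y) {g : α × β → γ} (hg : Measurable g) :
    μ.map (fun ω => g (X ω, Y ω)) = ((μ.map X).prod (μ.map Y)).map g := by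
  rw [← (indepFun_iff_map_prod_eq_prod_map_map hX.aemeasurable hY.aemeasurable).1 hXY,
    Measure.map_map hg (hX.prodMk hY)]
  rfl

lemma withDensity_ofReal_ite {α : Type*} [MeasurableSpace α] (μ : Measure α) {s : Set α}
    [DecidablePred (· ∈ s)] (hs : MeasurableSet s) (u : α → ℝ) :
    μ.withDensity (fun x => ENNReal.ofReal (if x ∈ s then u x else 0))
      = (μ.restrict s).withDensity fun x => ENNReal.ofReal (u x) := by
  rw [← withDensity_indicator hs]
  congr with x
  by_cases hx : x ∈ s <;> simp [hx]

lemma setLIntegral_Icc_ofReal {u : ℝ → ℝ} {a b : ℝ} (hab : a ≤ b) (hu : ContinuousOn u (Icc a b))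
    (hu₀ : ∀ x ∈ Icc a b, 0 ≤ u x) :
    ∫⁻ x in Icc a b, ENNReal.ofReal (u x) = ENNReal.ofReal (∫ x in a..b, u x) := by
  rw [intervalIntegral.integral_of_le hab, ← integral_Icc_eq_integral_Ioc,
    ofReal_integral_eq_lintegral_ofReal hu.integrableOn_Icc
      ((ae_restrict_iff' measurableSet_Icc).2 (ae_of_all _ hu₀))]

lemma withDensity_restrict_Ici_apply_Iic {u : ℝ → ℝ} (hu : Continuous u) {a t : ℝ}
    (hu₀ : ∀ x, a ≤ x → 0 ≤ u x) (ht : a ≤ t) :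
    ((volume.restrict (Ici a)).withDensity fun x => ENNReal.ofReal (u x)) (Iic t)
      = ENNReal.ofReal (∫ x in a..t, u x) := by
  rw [withDensity_apply _ measurableSet_Iic, Measure.restrict_restrict measurableSet_Iic,
    Iic_inter_Ici, setLIntegral_Icc_ofReal ht hu.continuousOn fun x hx => hu₀ x hx.1]

lemma lintegral_ofReal_withDensity_restrict_Icc {u g : ℝ → ℝ} {a b : ℝ} (hab : a ≤ b)
    (hu : Continuous u) (hg : Continuous g) (hu₀ : ∀ x ∈ Icc a b, 0 ≤ u x) (hg₀ : ∀ x, 0 ≤ g x) :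
    ∫⁻ x, ENNReal.ofReal (g x) ∂(volume.restrict (Icc a b)).withDensity
        (fun x => ENNReal.ofReal (u x))
      = ENNReal.ofReal (∫ x in a..b, u x * g x) := by
  rw [lintegral_withDensity_eq_lintegral_mul _ (by fun_prop) (by fun_prop)]
  simp only [Pi.mul_apply, ← ENNReal.ofReal_mul' (hg₀ _)]
  exact setLIntegral_Icc_ofReal hab (by fun_prop) fun x hx => mul_nonneg (hu₀ x hx) (hg₀ x)

lemma map_sqrt_sq_add_sq_apply_Iic (ν₁ ν₂ : Measure ℝ) [SFinite ν₁] [SFinite ν₂] {t : ℝ}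
    (ht : 0 ≤ t) :
    (ν₁.prod ν₂).map (fun p : ℝ × ℝ => √(p.1 ^ 2 + p.2 ^ 2)) (Iic t)
      = ∫⁻ z, ν₁ {x | x ^ 2 ≤ t ^ 2 - z ^ 2} ∂ν₂ := by
  have hm : Measurable fun p : ℝ × ℝ => √(p.1 ^ 2 + p.2 ^ 2) := by fun_prop
  rw [Measure.map_apply hm measurableSet_Iic, Measure.prod_apply_symm (hm measurableSet_Iic)]
  congr with z
  congr 1 with x
  simp only [mem_preimage, mem_Iic, Real.sqrt_le_left ht, mem_ofPred_eq]
  constructor <;> intro <;> linarith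

lemma altitudeLaw_setOf_sq_le {H : ℝ} (hH : 0 < H) (c : ℝ) :
    ((volume.restrict (Icc 0 H)).withDensity fun x =>
        ENNReal.ofReal (6 * x / H ^ 2 - 6 * x ^ 2 / H ^ 3)) {x | x ^ 2 ≤ c}
      = ENNReal.ofReal (altitudeSqCDF H c) := by
  rcases lt_or_ge c 0 with hc | hc
  · have hempty : {x : ℝ | x ^ 2 ≤ c} = ∅ :=
      eq_empty_of_forall_notMem fun x hx => by nlinarith [sq_nonneg x, hx.out]
    simp [hempty, altitudeSqCDF_of_nonpos hH.le hc.le]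
  have hderiv : ∀ x, HasDerivAt (fun x => 3 * x ^ 2 / H ^ 2 - 2 * x ^ 3 / H ^ 3)
      (6 * x / H ^ 2 - 6 * x ^ 2 / H ^ 3) x := fun x => by
    refine ((((hasDerivAt_pow 2 x).const_mul 3).div_const (H ^ 2)).sub
      (((hasDerivAt_pow 3 x).const_mul 2).div_const (H ^ 3))).congr_deriv ?_
    push_cast
    ring
  have hdens₀ : ∀ x ∈ Icc 0 (min (√c) H), 0 ≤ 6 * x / H ^ 2 - 6 * x ^ 2 / H ^ 3 := by
    intro x hx
    have hxH : x ≤ H := hx.2.trans (min_le_right _ _)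
    rw [show 6 * x / H ^ 2 - 6 * x ^ 2 / H ^ 3 = 6 * x * (H - x) / H ^ 3 by field_simp]
    exact div_nonneg (mul_nonneg (by linarith [hx.1]) (by linarith)) (by positivity)
  have hset : {x : ℝ | x ^ 2 ≤ c} = Icc (-√c) √c := by
    ext x
    exact Real.sq_le hc
  rw [hset, withDensity_apply _ measurableSet_Icc, Measure.restrict_restrict measurableSet_Icc,
    Icc_inter_Icc, max_eq_right (neg_nonpos.2 (Real.sqrt_nonneg c)),
    setLIntegral_Icc_ofReal (le_min (Real.sqrt_nonneg c) hH.le) (by fun_prop) hdens₀,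
    intervalIntegral.integral_eq_sub_of_hasDerivAt (fun x _ => hderiv x)
      ((by fun_prop : Continuous _).intervalIntegrable _ _)]
  simp [altitudeSqCDF]

end Measure

/-- Density of the 3D UAV-to-user distance `W = √(h² + Z²)` in the mobility
phase of the mixed mobility model: `h` with density `6x/H² − 6x²/H³` on
`[0, H]`, `Z` with density `2z/R²` on `[0, R]`, independent. -/
theorem mixed_mobility_mobile_distance_density
    {Ω : Type*} [MeasurableSpace Ω] (μ : Measure Ω) [IsProbabilityMeasure μ]
    (H R : ℝ) (hH : 0 < H) (hHR : H ≤ R)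
    (h Z : Ω → ℝ) (hhm : Measurable h) (hZm : Measurable Z)
    (hindep : IndepFun h Z μ)
    (hh : μ.map h = volume.withDensity (fun x => ENNReal.ofReal
        (if x ∈ Set.Icc (0 : ℝ) H then 6 * x / H ^ 2 - 6 * x ^ 2 / H ^ 3 else 0)))
    (hZ : μ.map Z = volume.withDensity (fun z => ENNReal.ofReal
        (if z ∈ Set.Icc (0 : ℝ) R then 2 * z / R ^ 2 else 0)))
    (f : ℝ → ℝ)
    (hf : ∀ w, f w =
      if 0 ≤ w ∧ w < H then 6 * w ^ 3 / (R ^ 2 * H ^ 2) - 4 * w ^ 4 / (R ^ 2 * H ^ 3)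
      else if H ≤ w ∧ w < R then 2 * w / R ^ 2
      else if R ≤ w ∧ w ≤ Real.sqrt (R ^ 2 + H ^ 2) then
        2 * w / R ^ 2 - 6 * w * (w ^ 2 - R ^ 2) / (R ^ 2 * H ^ 2)
          + 4 * w * (w ^ 2 - R ^ 2) ^ ((3 : ℝ) / 2) / (R ^ 2 * H ^ 3)
      else 0) :
    μ.map (fun ω => Real.sqrt ((h ω) ^ 2 + (Z ω) ^ 2))
      = volume.withDensity (fun w => ENNReal.ofReal (f w)) := by
  have hR : 0 < R := hH.trans_le hHR
  have hW : Measurable fun ω => √(h ω ^ 2 + Z ω ^ 2) := by fun_prop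
  have hf' : f = fun w => if w ∈ Ici 0 then distanceDensity H R w else 0 :=
    funext fun w => (hf w).trans (piecewise_eq_ite_distanceDensity hH hHR w)
  have := Measure.isProbabilityMeasure_map (μ := μ) hW.aemeasurable
  refine Measure.ext_of_Iic _ _ fun t => ?_
  rw [hf', withDensity_ofReal_ite _ measurableSet_Ici]
  rcases lt_or_ge t 0 with ht | ht
  · have hempty : (fun ω => √(h ω ^ 2 + Z ω ^ 2)) ⁻¹' Iic t = ∅ :=
      eq_empty_of_forall_notMem fun ω hω => (ht.trans_le (Real.sqrt_nonneg _)).not_ge hω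
    simp [Measure.map_apply hW measurableSet_Iic, hempty, withDensity_apply _ measurableSet_Iic,
      Iic_inter_Ici, Icc_eq_empty ht.not_ge]
  rw [hindep.map_eq_map_prod hhm hZm (g := fun p => √(p.1 ^ 2 + p.2 ^ 2)) (by fun_prop),
    map_sqrt_sq_add_sq_apply_Iic _ _ ht, hh, withDensity_ofReal_ite _ measurableSet_Icc]
  simp_rw [altitudeLaw_setOf_sq_le hH]
  rw [hZ, withDensity_ofReal_ite _ measurableSet_Icc,
    lintegral_ofReal_withDensity_restrict_Icc hR.le (by fun_prop) (by fun_prop)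
      (fun z hz => by have := hz.1; positivity) fun _ => altitudeSqCDF_nonneg hH _,
    withDensity_restrict_Ici_apply_Iic (by fun_prop) (fun _ => distanceDensity_nonneg hH) ht,
    integral_distanceDensity hH, ← integral_two_mul_comp_const_sub_sq continuous_altitudeSqCDF,
    ← intervalIntegral.integral_div]
  congr 2 with z
  ring
end
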